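/- Let f : ℝ^{n×m} → ℝ be continuously differentiable, λ > 0, μ > 0. Suppose (Ū, V̄) ∈ ℝ^{n×r} × ℝ^{m×r} is a local minimizer of Φ_{λ,μ}. Then J_Ū = J_V̄ =: J, and the submatrix pair (Ū_J, V̄_J) ∈ ℝ^{n×|J|} × ℝ^{m×|J|} is a local minimizer of the function (A,B) ↦ f(ABᵀ) + (μ/2)(‖A‖_F² + ‖B‖_F²) on ℝ^{n×|J|} × ℝ^{m×|J|}. -/

import Mathlib

/-!
If column `j` of `V̄` vanishes but column `j` of `Ū` does not, scaling that column of `Ū` by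
`1 - t` changes neither `ŪV̄ᵀ` nor the column counts, yet lowers `(μ/2)‖Ū‖_F²`: this contradicts
local minimality. The symmetry `(U, V, f) ↦ (V, U, f ∘ transpose)` of `Φ` then gives
`J_Ū = J_V̄ =: J`. A pair `(A, B)` with columns indexed by `J` becomes, after padding with zero
columns, a pair with the same value of `F_μ`, at the same distance from `(Ū, V̄)`, and with at most
`|J|` nonzero columns per factor; since `Φ(Ū, V̄) = F_μ(Ū_J, V̄_J) + 2λ|J|`, local minimality of
`Φ` at `(Ū, V̄)` passes to `F_μ` at `(Ū_J, V̄_J)`.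
-/

open Filter Topology Matrix
open scoped Classical

attribute [local instance] Matrix.frobeniusSeminormedAddCommGroup
  Matrix.frobeniusNormedAddCommGroup Matrix.frobeniusNormedSpace

/-- The Frobenius (trace) inner product `⟨A,B⟩ = trace(AᵀB) = ∑ᵢⱼ Aᵢⱼ Bᵢⱼ` on matrices. -/
noncomputable def frobInner {α β : Type*} [Fintype α] [Fintype β] (A B : Matrix α β ℝ) : ℝ :=
  ∑ i, ∑ j, A i j * B i j

/-- The column `ℓ_{2,0}`-norm: the number of nonzero columns. -/
noncomputable def l20 {α β : Type*} [Fintype α] [Fintype β] (A : Matrix α β ℝ) : ℕ :=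
  {j : β | (fun i => A i j) ≠ 0}.ncard

/-- `F_μ(U,V) = f(UVᵀ) + (μ/2)(‖U‖_F² + ‖V‖_F²)`, for factors with columns indexed
by an arbitrary finite type `γ`. -/
noncomputable def Fmu {n m : ℕ} {γ : Type*} [Fintype γ] (f : Matrix (Fin n) (Fin m) ℝ → ℝ)
    (mu : ℝ) (U : Matrix (Fin n) γ ℝ) (V : Matrix (Fin m) γ ℝ) : ℝ :=
  f (U * Vᵀ) + mu / 2 * (frobInner U U + frobInner V V)

/-- `Φ_{λ,μ}(U,V) = f(UVᵀ) + (μ/2)(‖U‖_F² + ‖V‖_F²) + λ(‖U‖_{2,0} + ‖V‖_{2,0})`. -/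
noncomputable def Phi {n m r : ℕ} (f : Matrix (Fin n) (Fin m) ℝ → ℝ) (lam mu : ℝ)
    (U : Matrix (Fin n) (Fin r) ℝ) (V : Matrix (Fin m) (Fin r) ℝ) : ℝ :=
  Fmu f mu U V + lam * ((l20 U : ℝ) + (l20 V : ℝ))

/-- The squared Frobenius norm of a pair: `‖(U,V)‖_F² = ‖U‖_F² + ‖V‖_F²`. -/
noncomputable def pairNormSq {α β γ : Type*} [Fintype α] [Fintype β] [Fintype γ]
    (U : Matrix α γ ℝ) (V : Matrix β γ ℝ) : ℝ :=
  frobInner U U + frobInner V V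

variable {α β γ κ : Type*}

def nonzeroCols (U : Matrix α γ ℝ) : Set γ := {j | (fun i => U i j) ≠ 0}

section Frobenius

variable [Fintype α] [Fintype β] [Fintype γ]

theorem frobInner_eq_trace (A B : Matrix α β ℝ) : frobInner A B = trace (A * Bᵀ) := by
  simp [frobInner, trace, mul_apply]

theorem frobInner_zero (A : Matrix α β ℝ) : frobInner A 0 = 0 := by
  simp [frobInner]

theorem pairNormSq_comm (U : Matrix α γ ℝ) (V : Matrix β γ ℝ) :
    pairNormSq U V = pairNormSq V U :=
  add_comm _ _

def IsLocalMinPair (F : Matrix α γ ℝ → Matrix β γ ℝ → ℝ) (U : Matrix α γ ℝ)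
    (V : Matrix β γ ℝ) : Prop :=
  ∃ ε > (0:ℝ), ∀ U' V', Real.sqrt (pairNormSq (U' - U) (V' - V)) ≤ ε → F U V ≤ F U' V'

theorem IsLocalMinPair.swap {F : Matrix α γ ℝ → Matrix β γ ℝ → ℝ}
    {G : Matrix β γ ℝ → Matrix α γ ℝ → ℝ} {U : Matrix α γ ℝ} {V : Matrix β γ ℝ}
    (h : IsLocalMinPair F U V) (hFG : ∀ U V, G V U = F U V) : IsLocalMinPair G V U := by
  obtain ⟨ε, hε, hmin⟩ := h
  refine ⟨ε, hε, fun V' U' hdist => ?_⟩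
  rw [hFG, hFG]
  exact hmin U' V' (by rwa [pairNormSq_comm])

end Frobenius

section UpdateCol

variable [DecidableEq γ]

theorem updateCol_sub_self (U : Matrix α γ ℝ) (j : γ) (c : α → ℝ) :
    U.updateCol j c - U = (0 : Matrix α γ ℝ).updateCol j (c - fun i => U i j) := by
  ext i k
  by_cases hk : k = j
  · subst hk; simp
  · simp [hk]

theorem nonzeroCols_updateCol_smul (U : Matrix α γ ℝ) (j : γ) {s : ℝ} (hs : s ≠ 0) :
    nonzeroCols (U.updateCol j (s • fun i => U i j)) = nonzeroCols U := by
  ext k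
  by_cases hk : k = j
  · subst hk
    simp [nonzeroCols, hs, funext_iff]
  · simp [nonzeroCols, hk]

theorem updateCol_mul_transpose_of_col_eq_zero [Fintype γ] (U : Matrix α γ ℝ)
    (V : Matrix β γ ℝ) {j : γ} (hV : (fun i => V i j) = 0) (c : α → ℝ) :
    U.updateCol j c * Vᵀ = U * Vᵀ := by
  ext i l
  refine Finset.sum_congr rfl fun k _ => ?_
  by_cases hk : k = j
  · subst hk
    simp [show V l k = 0 from congrFun hV l]
  · simp [hk]

variable [Fintype α] [Fintype γ]

theorem frobInner_updateCol_self (U : Matrix α γ ℝ) (j : γ) (c : α → ℝ) :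
    frobInner (U.updateCol j c) (U.updateCol j c) =
      frobInner U U + (c ⬝ᵥ c - (fun i => U i j) ⬝ᵥ (fun i => U i j)) := by
  have hentry : ∀ i k, U.updateCol j c i k * U.updateCol j c i k =
      U i k * U i k + if k = j then c i * c i - U i j * U i j else 0 := by
    intro i k
    by_cases hk : k = j
    · subst hk; simp
    · simp [hk]
  simp only [frobInner, hentry, Finset.sum_add_distrib, Finset.sum_ite_eq', Finset.mem_univ,
    if_true, Finset.sum_sub_distrib, dotProduct]

theorem frobInner_updateCol_smul (U : Matrix α γ ℝ) (j : γ) (s : ℝ) :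
    frobInner (U.updateCol j (s • fun i => U i j)) (U.updateCol j (s • fun i => U i j)) =
      frobInner U U - (1 - s ^ 2) * ((fun i => U i j) ⬝ᵥ fun i => U i j) := by
  rw [frobInner_updateCol_self, smul_dotProduct, dotProduct_smul, smul_eq_mul, smul_eq_mul]
  ring

theorem frobInner_updateCol_smul_sub (U : Matrix α γ ℝ) (j : γ) (s : ℝ) :
    frobInner (U.updateCol j (s • fun i => U i j) - U)
        (U.updateCol j (s • fun i => U i j) - U) =
      (1 - s) ^ 2 * ((fun i => U i j) ⬝ᵥ fun i => U i j) := by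
  have hcol : (s • fun i => U i j) - (fun i => U i j) = (s - 1) • fun i => U i j := by
    rw [sub_smul, one_smul]
  rw [updateCol_sub_self, hcol, frobInner_updateCol_self, frobInner_zero, smul_dotProduct,
    dotProduct_smul, smul_eq_mul, smul_eq_mul]
  simp only [Matrix.zero_apply, ← Pi.zero_def, dotProduct_zero, sub_zero]
  ring

end UpdateCol

section ColEmbed

variable [DecidableEq γ]

/-- For injective `e`, `A * colEmbed e` moves column `k` of `A` to position `e k` and fills the
other columns with zeros. -/
def colEmbed (e : κ → γ) : Matrix κ γ ℝ := (1 : Matrix γ γ ℝ).submatrix e id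

theorem colEmbed_apply (e : κ → γ) (s : κ) (k : γ) :
    colEmbed e s k = (1 : Matrix γ γ ℝ) (e s) k :=
  rfl

theorem colEmbed_mul_transpose [Fintype γ] {e : κ → γ} (he : Function.Injective e) :
    colEmbed e * (colEmbed e)ᵀ = 1 := by
  unfold colEmbed
  rw [transpose_submatrix, transpose_one, ← submatrix_mul _ _ _ _ _ Function.bijective_id,
    Matrix.one_mul, submatrix_one _ he]

variable [Fintype κ]

theorem mul_colEmbed_apply_of_notMem_range (A : Matrix α κ ℝ) {e : κ → γ} (i : α) {k : γ}
    (hk : k ∉ Set.range e) : (A * colEmbed e) i k = 0 :=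
  Finset.sum_eq_zero fun s _ => by
    change A i s * colEmbed e s k = 0
    rw [colEmbed_apply, one_apply_ne (fun h : e s = k => hk ⟨s, h⟩), mul_zero]

theorem nonzeroCols_mul_colEmbed_subset (A : Matrix α κ ℝ) (e : κ → γ) :
    nonzeroCols (A * colEmbed e) ⊆ Set.range e := by
  intro k hk
  by_contra hke
  exact hk (funext fun i => mul_colEmbed_apply_of_notMem_range A i hke)

theorem submatrix_mul_colEmbed {e : κ → γ} (he : Function.Injective e) (U : Matrix α γ ℝ)
    (hU : nonzeroCols U ⊆ Set.range e) : U.submatrix id e * colEmbed e = U := by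
  ext i k
  by_cases hk : k ∈ Set.range e
  · obtain ⟨s, rfl⟩ := hk
    refine (Fintype.sum_eq_single s fun s' hs' => ?_).trans ?_
    · change U i (e s') * colEmbed e s' (e s) = 0
      rw [colEmbed_apply, one_apply_ne (he.ne hs'), mul_zero]
    · change U i (e s) * colEmbed e s (e s) = U i (e s)
      rw [colEmbed_apply, one_apply_eq, mul_one]
  · rw [mul_colEmbed_apply_of_notMem_range _ i hk]
    exact (congrFun (not_not.mp (mt (@hU k) hk)) i).symm

variable [Fintype γ]

theorem mul_colEmbed_mul_transpose {e : κ → γ} (he : Function.Injective e) (A : Matrix α κ ℝ)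
    (B : Matrix β κ ℝ) : A * colEmbed e * (B * colEmbed e)ᵀ = A * Bᵀ := by
  rw [transpose_mul, Matrix.mul_assoc, ← Matrix.mul_assoc (colEmbed e),
    colEmbed_mul_transpose he, Matrix.one_mul]

variable [Fintype α] [Fintype β]

theorem l20_mul_colEmbed_le (A : Matrix α κ ℝ) (e : κ → γ) :
    l20 (A * colEmbed e) ≤ (Set.range e).ncard :=
  Set.ncard_le_ncard (nonzeroCols_mul_colEmbed_subset A e)

theorem pairNormSq_mul_colEmbed {e : κ → γ} (he : Function.Injective e) (A : Matrix α κ ℝ)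
    (B : Matrix β κ ℝ) : pairNormSq (A * colEmbed e) (B * colEmbed e) = pairNormSq A B := by
  simp only [pairNormSq, frobInner_eq_trace, mul_colEmbed_mul_transpose he]

end ColEmbed

theorem exists_pos_lt_one_mul_sqrt_le {c ε : ℝ} (hc : 0 < c) (hε : 0 < ε) :
    ∃ t, 0 < t ∧ t < 1 ∧ t * Real.sqrt c ≤ ε := by
  have hsqrt : 0 < Real.sqrt c := Real.sqrt_pos.mpr hc
  refine ⟨min (1 / 2) (ε / Real.sqrt c), by positivity,
    (min_le_left _ _).trans_lt (by norm_num), ?_⟩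
  calc min (1 / 2) (ε / Real.sqrt c) * Real.sqrt c ≤ ε / Real.sqrt c * Real.sqrt c := by
        gcongr; exact min_le_right _ _
    _ = ε := div_mul_cancel₀ ε hsqrt.ne'

section Factorization

variable {n m r : ℕ}

theorem Fmu_mul_colEmbed [Fintype κ] [Fintype γ] [DecidableEq γ]
    (f : Matrix (Fin n) (Fin m) ℝ → ℝ) (mu : ℝ) {e : κ → γ} (he : Function.Injective e) (A : Matrix (Fin n) κ ℝ)
    (B : Matrix (Fin m) κ ℝ) : Fmu f mu (A * colEmbed e) (B * colEmbed e) = Fmu f mu A B := by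
  simp only [Fmu, frobInner_eq_trace, mul_colEmbed_mul_transpose he]

theorem Phi_transpose_swap (f : Matrix (Fin n) (Fin m) ℝ → ℝ) (lam mu : ℝ)
    (U : Matrix (Fin n) (Fin r) ℝ) (V : Matrix (Fin m) (Fin r) ℝ) :
    Phi (fun X => f Xᵀ) lam mu V U = Phi f lam mu U V := by
  simp only [Phi, Fmu, transpose_mul, transpose_transpose]
  ring

theorem IsLocalMinPair.nonzeroCols_subset {f : Matrix (Fin n) (Fin m) ℝ → ℝ} {lam mu : ℝ}
    {U : Matrix (Fin n) (Fin r) ℝ} {V : Matrix (Fin m) (Fin r) ℝ}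
    (h : IsLocalMinPair (Phi f lam mu) U V) (hmu : 0 < mu) :
    nonzeroCols U ⊆ nonzeroCols V := by
  intro j hjU
  by_contra hjV
  have hVj : (fun i => V i j) = 0 := not_not.mp hjV
  set c := (fun i => U i j) ⬝ᵥ fun i => U i j
  have hc : 0 < c := lt_of_le_of_ne (Finset.sum_nonneg fun i _ => mul_self_nonneg _)
    (Ne.symm (dotProduct_self_eq_zero.not.mpr hjU))
  obtain ⟨ε, hε, hmin⟩ := h
  obtain ⟨t, ht0, ht1, htε⟩ := exists_pos_lt_one_mul_sqrt_le hc hε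
  set U' := U.updateCol j ((1 - t) • fun i => U i j)
  have hdist : Real.sqrt (pairNormSq (U' - U) (V - V)) ≤ ε := by
    rwa [pairNormSq, frobInner_updateCol_smul_sub, sub_self, frobInner_zero, add_zero,
      sub_sub_cancel, Real.sqrt_mul (sq_nonneg t), Real.sqrt_sq ht0.le]
  have hprod : U' * Vᵀ = U * Vᵀ := updateCol_mul_transpose_of_col_eq_zero U V hVj _
  have hl20 : l20 U' = l20 U :=
    congrArg Set.ncard (nonzeroCols_updateCol_smul U j (by linarith))
  have hdecrease : 0 < mu / 2 * ((1 - (1 - t) ^ 2) * c) := by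
    have : 0 < 1 - (1 - t) ^ 2 := by nlinarith
    positivity
  have hle := hmin U' V hdist
  simp only [Phi, Fmu, hprod, hl20, U', frobInner_updateCol_smul] at hle
  linarith

theorem IsLocalMinPair.Fmu_submatrix [Fintype κ] {f : Matrix (Fin n) (Fin m) ℝ → ℝ}
    {lam mu : ℝ} {U : Matrix (Fin n) (Fin r) ℝ}
    {V : Matrix (Fin m) (Fin r) ℝ} (h : IsLocalMinPair (Phi f lam mu) U V) (hlam : 0 ≤ lam)
    {e : κ → Fin r} (he : Function.Injective e) (hU : Set.range e = nonzeroCols U)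
    (hV : Set.range e = nonzeroCols V) :
    IsLocalMinPair (Fmu f mu) (U.submatrix id e) (V.submatrix id e) := by
  obtain ⟨ε, hε, hmin⟩ := h
  refine ⟨ε, hε, fun A B hdist => ?_⟩
  have hUe := submatrix_mul_colEmbed he U hU.ge
  have hVe := submatrix_mul_colEmbed he V hV.ge
  have hdist' : Real.sqrt (pairNormSq (A * colEmbed e - U) (B * colEmbed e - V)) ≤ ε := by
    rwa [← hUe, ← hVe, ← Matrix.sub_mul, ← Matrix.sub_mul, pairNormSq_mul_colEmbed he]
  have hAU : (l20 (A * colEmbed e) : ℝ) ≤ l20 U := by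
    exact_mod_cast hU ▸ l20_mul_colEmbed_le A e
  have hBV : (l20 (B * colEmbed e) : ℝ) ≤ l20 V := by
    exact_mod_cast hV ▸ l20_mul_colEmbed_le B e
  have hpenalty := mul_le_mul_of_nonneg_left (add_le_add hAU hBV) hlam
  have hle := hmin _ _ hdist'
  rw [← Fmu_mul_colEmbed f mu he, hUe, hVe]
  simp only [Phi, Fmu_mul_colEmbed f mu he] at hle
  linarith

end Factorization

theorem local_min_Phi_imp_Fmu_general {n m r : ℕ}
    (f : Matrix (Fin n) (Fin m) ℝ → ℝ)
    (lam mu : ℝ) (hlam : 0 < lam) (hmu : 0 < mu)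
    (Ubar : Matrix (Fin n) (Fin r) ℝ) (Vbar : Matrix (Fin m) (Fin r) ℝ)
    (hmin : ∃ ε > (0:ℝ), ∀ (U : Matrix (Fin n) (Fin r) ℝ) (V : Matrix (Fin m) (Fin r) ℝ),
        Real.sqrt (pairNormSq (U - Ubar) (V - Vbar)) ≤ ε →
        Phi f lam mu Ubar Vbar ≤ Phi f lam mu U V) :
    (∀ j : Fin r, (fun i => Ubar i j) ≠ 0 ↔ (fun i => Vbar i j) ≠ 0) ∧
      (∃ δ > (0:ℝ),
        ∀ (A : Matrix (Fin n) {j : Fin r // (fun i => Ubar i j) ≠ 0} ℝ)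
          (B : Matrix (Fin m) {j : Fin r // (fun i => Ubar i j) ≠ 0} ℝ),
          Real.sqrt (pairNormSq (A - Matrix.of fun i j => Ubar i j.1)
            (B - Matrix.of fun i j => Vbar i j.1)) ≤ δ →
          Fmu f mu (Matrix.of fun i (j : {j : Fin r // (fun i => Ubar i j) ≠ 0}) => Ubar i j.1)
              (Matrix.of fun i j => Vbar i j.1) ≤ Fmu f mu A B) := by
  have hmin : IsLocalMinPair (Phi f lam mu) Ubar Vbar := hmin
  have hswap : IsLocalMinPair (Phi (fun X => f Xᵀ) lam mu) Vbar Ubar :=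
    hmin.swap (Phi_transpose_swap f lam mu)
  have hcols : nonzeroCols Ubar = nonzeroCols Vbar :=
    (hmin.nonzeroCols_subset hmu).antisymm (hswap.nonzeroCols_subset hmu)
  exact ⟨fun j => Set.ext_iff.mp hcols j,
    hmin.Fmu_submatrix hlam.le Subtype.val_injective Subtype.range_coe
      (Subtype.range_coe.trans hcols)⟩

/-- if `(Ū,V̄)` is a local minimizer of `Φ_{λ,μ}`, then `J_Ū = J_V̄ =: J`
and the submatrix pair `(Ū_J, V̄_J)` of nonzero columns is a local minimizer of
`(A,B) ↦ f(ABᵀ) + (μ/2)(‖A‖_F² + ‖B‖_F²)` on `ℝ^{n×|J|} × ℝ^{m×|J|}`. -/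
theorem local_min_Phi_imp_Fmu {n m r : ℕ}
    (f : Matrix (Fin n) (Fin m) ℝ → ℝ) (hf : ContDiff ℝ 1 f)
    (lam mu : ℝ) (hlam : 0 < lam) (hmu : 0 < mu)
    (Ubar : Matrix (Fin n) (Fin r) ℝ) (Vbar : Matrix (Fin m) (Fin r) ℝ)
    (hmin : ∃ ε > (0:ℝ), ∀ (U : Matrix (Fin n) (Fin r) ℝ) (V : Matrix (Fin m) (Fin r) ℝ),
        Real.sqrt (pairNormSq (U - Ubar) (V - Vbar)) ≤ ε →
        Phi f lam mu Ubar Vbar ≤ Phi f lam mu U V) :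
    (∀ j : Fin r, (fun i => Ubar i j) ≠ 0 ↔ (fun i => Vbar i j) ≠ 0) ∧
      (∃ δ > (0:ℝ),
        ∀ (A : Matrix (Fin n) {j : Fin r // (fun i => Ubar i j) ≠ 0} ℝ)
          (B : Matrix (Fin m) {j : Fin r // (fun i => Ubar i j) ≠ 0} ℝ),
          Real.sqrt (pairNormSq (A - Matrix.of fun i j => Ubar i j.1)
            (B - Matrix.of fun i j => Vbar i j.1)) ≤ δ →
          Fmu f mu (Matrix.of fun i (j : {j : Fin r // (fun i => Ubar i j) ≠ 0}) => Ubar i j.1)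
              (Matrix.of fun i j => Vbar i j.1) ≤ Fmu f mu A B) :=
  local_min_Phi_imp_Fmu_general f lam mu hlam hmu Ubar Vbar hmin
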